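/- Let k ≥ 1 be an integer, s ≥ 0, and suppose given for m = 1, …, s integers g_m ≥ 0, n_m ≥ 0, ℓ_m ≥ 0 and rationals D_m satisfying k·D_m + 2g_m − 2 + n_m + ℓ_m ≥ 0. Suppose also given finitely many rationals N_v and nonnegative integers δ_v, e_v with k·N_v = δ_v + e_v for each v, and Σ_v e_v = Σ_{m=1}^s n_m. If g, ℓ are integers with Σ_m g_m ≤ g and Σ_m ℓ_m ≤ ℓ, then d_∞ := Σ_m D_m + Σ_v N_v satisfies 2k·d_∞ + 4g + 2ℓ ≥ 4s + 2·Σ_v δ_v. -/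

import Mathlib

/-! Summing the stability inequalities `deg ρ ≥ 0` over the `s` components of `C_∞` gives
`2s ≤ k·Σ D_m + 2·Σ g_m + Σ n_m + Σ ℓ_m`. The nodes joining `C_∞` to level `1∞` are counted once
from each side, so `Σ e_v = Σ n_m` turns `k·Σ N_v = Σ δ_v + Σ e_v` into `k·Σ N_v = Σ δ_v + Σ n_m`;
eliminating `Σ n_m` between the two and bounding `Σ g_m ≤ g`, `Σ ℓ_m ≤ ℓ` gives the claim. -/

open Finset

variable {ι κ : Type*} [Fintype ι] [Fintype κ]

theorem two_mul_card_le_of_stable (k : ℚ) (D : ι → ℚ) (g n ℓ : ι → ℕ)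
    (hD : ∀ m, 0 ≤ k * D m + 2 * (g m : ℚ) - 2 + (n m : ℚ) + (ℓ m : ℚ)) :
    2 * (Fintype.card ι : ℚ) ≤
      k * ∑ m, D m + 2 * ∑ m, (g m : ℚ) + ∑ m, (n m : ℚ) + ∑ m, (ℓ m : ℚ) := by
  have hsum : Fintype.card ι • (2 : ℚ) ≤
      ∑ m, (k * D m + 2 * (g m : ℚ) + (n m : ℚ) + (ℓ m : ℚ)) :=
    card_nsmul_le_sum _ _ _ fun m _ => by linarith [hD m]
  simp only [nsmul_eq_mul, sum_add_distrib, mul_sum] at hsum ⊢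
  linarith

theorem mul_sum_eq_sum_add_sum_of_sum_eq (k : ℚ) (N : ι → ℚ) (δ e : ι → ℕ) (n : κ → ℕ)
    (hN : ∀ v, k * N v = (δ v : ℚ) + (e v : ℚ)) (he : ∑ v, e v = ∑ m, n m) :
    k * ∑ v, N v = ∑ v, (δ v : ℚ) + ∑ m, (n m : ℚ) := by
  simp only [mul_sum, hN, sum_add_distrib]
  congr 1
  exact_mod_cast he

theorem stmt_14_general (k : ℕ) (s : ℕ)
    (g' n ℓ' : Fin s → ℕ) (D : Fin s → ℚ)
    (hD : ∀ m, 0 ≤ (k : ℚ) * D m + 2 * (g' m : ℚ) - 2 + (n m : ℚ) + (ℓ' m : ℚ))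
    (r : ℕ) (N : Fin r → ℚ) (δ e : Fin r → ℕ)
    (hN : ∀ v, (k : ℚ) * N v = (δ v : ℚ) + (e v : ℚ))
    (he : ∑ v, e v = ∑ m, n m)
    (g ℓ : ℤ) (hg : (∑ m, (g' m : ℤ)) ≤ g) (hℓ : (∑ m, (ℓ' m : ℤ)) ≤ ℓ) :
    4 * (s : ℚ) + 2 * (∑ v, (δ v : ℚ)) ≤
      2 * (k : ℚ) * ((∑ m, D m) + ∑ v, N v) + 4 * (g : ℚ) + 2 * (ℓ : ℚ) := by
  have hstable := two_mul_card_le_of_stable (k : ℚ) D g' n ℓ' hD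
  rw [Fintype.card_fin] at hstable
  have hnodes := mul_sum_eq_sum_add_sum_of_sum_eq (k : ℚ) N δ e n hN he
  have hgq : ∑ m, (g' m : ℚ) ≤ g := by exact_mod_cast hg
  have hℓq : ∑ m, (ℓ' m : ℚ) ≤ ℓ := by exact_mod_cast hℓ
  linarith

theorem stmt_14 (k : ℕ) (hk : 1 ≤ k) (s : ℕ)
    (g' n ℓ' : Fin s → ℕ) (D : Fin s → ℚ)
    (hD : ∀ m, 0 ≤ (k : ℚ) * D m + 2 * (g' m : ℚ) - 2 + (n m : ℚ) + (ℓ' m : ℚ))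
    (r : ℕ) (N : Fin r → ℚ) (δ e : Fin r → ℕ)
    (hN : ∀ v, (k : ℚ) * N v = (δ v : ℚ) + (e v : ℚ))
    (he : ∑ v, e v = ∑ m, n m)
    (g ℓ : ℤ) (hg : (∑ m, (g' m : ℤ)) ≤ g) (hℓ : (∑ m, (ℓ' m : ℤ)) ≤ ℓ) :
    4 * (s : ℚ) + 2 * (∑ v, (δ v : ℚ)) ≤
      2 * (k : ℚ) * ((∑ m, D m) + ∑ v, N v) + 4 * (g : ℚ) + 2 * (ℓ : ℚ) :=
  stmt_14_general k s g' n ℓ' D hD r N δ e hN he g ℓ hg hℓ
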